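/- arXiv:1302.1266 — 4 statements merged into one kernel-verified Lean document; each statement's English description precedes it below -/
import Mathlib

section
/- Let R_n be the polynomials defined by R_0=1, R_1(X)=1-X, R_n(X)=(2-X)R_{n-1}(X)-R_{n-2}(X), and let r(s) = 2(1 - cos(π/(2s+1))). Then r(s) is the smallest positive root of R_s, i.e., R_s(r(s)) = 0 and R_s(x) ≠ 0 for 0 < x < r(s). -/
open Polynomial

private lemma cos_sum_id (a b : ℝ) :
    Real.cos (a + b) + Real.cos (a - b) = 2 * Real.cos a * Real.cos b := by
  rw [Real.cos_add, Real.cos_sub]; ring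

private lemma key (R : ℕ → Polynomial ℝ)
    (hR0 : R 0 = 1) (hR1 : R 1 = 1 - X)
    (hRrec : ∀ n, 2 ≤ n → R n = (2 - X) * R (n - 1) - R (n - 2))
    (θ : ℝ) : ∀ n : ℕ,
    (R n).eval (2 - 2 * Real.cos θ) * Real.cos (θ / 2)
      = Real.cos ((2 * n + 1) * θ / 2) := by
  intro n
  induction n using Nat.twoStepInduction with
  | zero => simp [hR0]
  | one =>
    have h := cos_sum_id θ (θ / 2)
    have e1 : θ + θ / 2 = (2 * (1:ℕ) + 1) * θ / 2 := by push_cast; ring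
    have e2 : θ - θ / 2 = θ / 2 := by ring
    rw [e1, e2] at h
    simp [hR1]
    push_cast at h ⊢
    norm_num at h ⊢
    linear_combination -h
  | more n ih1 ih2 =>
    have hrec := hRrec (n + 2) (by omega)
    have h := cos_sum_id ((2 * n + 3) * θ / 2) θ
    have e1 : (2 * n + 3) * θ / 2 + θ = (2 * (n + 2 : ℕ) + 1) * θ / 2 := by
      push_cast; ring
    have e2 : (2 * n + 3) * θ / 2 - θ = (2 * n + 1) * θ / 2 := by ring
    have e3 : (2 * (n + 1 : ℕ) + 1) * θ / 2 = (2 * n + 3) * θ / 2 := by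
      push_cast; ring
    rw [e1, e2] at h
    rw [e3] at ih2
    have : n + 2 - 1 = n + 1 := by omega
    rw [hrec, this]
    simp only [Nat.add_sub_cancel, eval_sub, eval_mul, eval_ofNat]
    simp only [eval_sub, eval_X, eval_ofNat]
    linear_combination 2 * Real.cos θ * ih2 - ih1 - h

theorem stmt_4 (R : ℕ → Polynomial ℝ)
    (hR0 : R 0 = 1) (hR1 : R 1 = 1 - X)
    (hRrec : ∀ n, 2 ≤ n → R n = (2 - X) * R (n - 1) - R (n - 2))
    (s : ℕ) (hs : 1 ≤ s) :
    (R s).eval (2 * (1 - Real.cos (Real.pi / (2 * s + 1)))) = 0 ∧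
      ∀ x : ℝ, 0 < x → x < 2 * (1 - Real.cos (Real.pi / (2 * s + 1))) →
        (R s).eval x ≠ 0 := by
  have hπ := Real.pi_pos
  set θ : ℝ := Real.pi / (2 * s + 1) with hθdef
  have hden : (0:ℝ) < 2 * s + 1 := by positivity
  have hs3 : (3:ℝ) ≤ 2 * s + 1 := by
    have : (1:ℝ) ≤ s := by exact_mod_cast hs
    linarith
  have hθpos : 0 < θ := by positivity
  have hθlt : θ ≤ Real.pi / 3 := by
    rw [hθdef]
    apply div_le_div_of_nonneg_left hπ.le (by norm_num) hs3
  have hθltpi : θ < Real.pi := lt_of_le_of_lt hθlt (by linarith)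
  constructor
  · have h := key R hR0 hR1 hRrec θ s
    have harg : (2 * s + 1) * θ / 2 = Real.pi / 2 := by
      rw [hθdef]; field_simp
    rw [harg, Real.cos_pi_div_two] at h
    have hcos : Real.cos (θ / 2) ≠ 0 := by
      apply ne_of_gt
      apply Real.cos_pos_of_mem_Ioo
      constructor <;> [linarith; linarith]
    have : 2 * (1 - Real.cos θ) = 2 - 2 * Real.cos θ := by ring
    rw [this]
    exact (mul_eq_zero.mp h).resolve_right hcos
  · intro x hx hxlt
    set φ := Real.arccos (1 - x / 2) with hφdef
    have hcosθ : Real.cos θ ≥ -1 := Real.neg_one_le_cos θ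
    have hx4 : x < 4 := by
      have := Real.cos_pos_of_mem_Ioo (show θ ∈ Set.Ioo (-(Real.pi/2)) (Real.pi/2) by
        constructor <;> [linarith; linarith])
      linarith
    have hmem : -1 < 1 - x / 2 ∧ 1 - x / 2 < 1 := by constructor <;> linarith
    have hcosφ : Real.cos φ = 1 - x / 2 :=
      Real.cos_arccos (by linarith) (by linarith)
    have hφpos : 0 < φ := by
      rw [hφdef]
      apply Real.arccos_pos.mpr; linarith
    have hφlt : φ < θ := by
      have : Real.arccos (1 - x / 2) < Real.arccos (Real.cos θ) := by
        apply Real.strictAntiOn_arccos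
        · exact ⟨by linarith, Real.cos_le_one θ⟩
        · exact ⟨by linarith, by linarith⟩
        · linarith
      rwa [Real.arccos_cos hθpos.le hθltpi.le] at this
    have hxeq : x = 2 - 2 * Real.cos φ := by rw [hcosφ]; ring
    have h := key R hR0 hR1 hRrec φ s
    rw [← hxeq] at h
    have hargpos : 0 < (2 * s + 1) * φ / 2 := by positivity
    have harglt : (2 * s + 1) * φ / 2 < Real.pi / 2 := by
      have h1 : (2 * s + 1) * φ < (2 * s + 1) * θ := by
        apply mul_lt_mul_of_pos_left hφlt hden
      have h2 : (2 * s + 1) * θ = Real.pi := by rw [hθdef]; field_simp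
      linarith
    have hcosarg : 0 < Real.cos ((2 * s + 1) * φ / 2) := by
      apply Real.cos_pos_of_mem_Ioo
      constructor <;> [linarith; linarith]
    have hcoshalf : 0 < Real.cos (φ / 2) := by
      apply Real.cos_pos_of_mem_Ioo
      constructor
      · linarith
      · have : φ < Real.pi := lt_trans hφlt hθltpi
        linarith
    intro hzero
    rw [hzero, zero_mul] at h
    linarith
end

section
/- Let R_n be the polynomials defined by R_0=1, R_1(X)=1-X, R_n(X)=(2-X)R_{n-1}(X)-R_{n-2}(X), and let r(s)=2(1-cos(π/(2s+1))). Then R_s is strictly decreasing on the interval (0, r(s)). -/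
open Polynomial

private lemma evalR_aux (R : ℕ → Polynomial ℝ)
    (hR0 : R 0 = 1) (hR1 : R 1 = 1 - X)
    (hRrec : ∀ n, 2 ≤ n → R n = (2 - X) * R (n - 1) - R (n - 2)) (θ : ℝ) :
    ∀ n : ℕ, (R n).eval (2 - 2 * Real.cos θ) * Real.cos (θ / 2)
        = Real.cos ((2 * n + 1) * θ / 2) ∧
      (R (n + 1)).eval (2 - 2 * Real.cos θ) * Real.cos (θ / 2)
        = Real.cos ((2 * (n + 1) + 1) * θ / 2) := by
  intro n
  induction n with
  | zero =>
    constructor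
    · rw [hR0]
      norm_num
    · rw [hR1]
      have h := Real.two_mul_cos_mul_cos θ (θ / 2)
      rw [show θ - θ / 2 = θ / 2 by ring] at h
      simp only [eval_sub, eval_one, eval_X]
      push_cast
      rw [show (2 * (0 + 1 : ℝ) + 1) * θ / 2 = θ + θ / 2 by ring]
      nlinarith [h]
  | succ n ih =>
    obtain ⟨ih1, ih2⟩ := ih
    refine ⟨by push_cast at ih2 ⊢; exact ih2, ?_⟩
    have hrec := hRrec (n + 2) (by omega)
    simp only [show n + 2 - 1 = n + 1 from rfl, show n + 2 - 2 = n from rfl] at hrec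
    have h2 := Real.two_mul_cos_mul_cos θ ((2 * (n : ℝ) + 3) * θ / 2)
    have h3 : θ - (2 * (n : ℝ) + 3) * θ / 2 = -((2 * (n : ℝ) + 1) * θ / 2) := by ring
    have h4 : θ + (2 * (n : ℝ) + 3) * θ / 2 = (2 * (n : ℝ) + 5) * θ / 2 := by ring
    rw [h3, h4, Real.cos_neg] at h2
    rw [show (n + 1 : ℕ) + 1 = n + 2 from rfl, hrec]
    simp only [eval_sub, eval_mul, eval_ofNat, eval_X]
    push_cast at ih1 ih2 ⊢
    rw [show (2 * ((n : ℝ) + 1 + 1) + 1) * θ / 2 = (2 * (n : ℝ) + 5) * θ / 2 by ring]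
    rw [show (2 * ((n : ℝ) + 1) + 1) * θ / 2 = (2 * (n : ℝ) + 3) * θ / 2 by ring] at ih2
    linear_combination (2 * Real.cos θ) * ih2 - ih1 + h2

private lemma cos_key (s : ℕ) (hs : 1 ≤ s) (α β : ℝ) (hα : 0 < α) (hab : α < β)
    (hβ : β < Real.pi / (2 * s + 1)) :
    Real.cos ((2 * s + 1) * β / 2) * Real.cos (α / 2)
      < Real.cos ((2 * s + 1) * α / 2) * Real.cos (β / 2) := by
  set m : ℝ := 2 * s + 1 with hm
  have hm3 : (3 : ℝ) ≤ m := by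
    have : (1 : ℝ) ≤ s := by exact_mod_cast hs
    simp only [hm]; linarith
  have hmpos : (0 : ℝ) < m := by linarith
  have hmb : m * β < Real.pi := by
    have h := (lt_div_iff₀ hmpos).mp hβ
    rw [mul_comm]; exact h
  have hαβ : 0 < β := lt_trans hα hab
  -- inequality A (strict)
  have hA : Real.cos (m * β / 2 + α / 2) < Real.cos (m * α / 2 + β / 2) := by
    apply Real.cos_lt_cos_of_nonneg_of_le_pi
    · positivity
    · nlinarith [Real.pi_pos]
    · nlinarith
  -- inequality B (non-strict)
  have hB : Real.cos (m * β / 2 - α / 2) ≤ Real.cos (m * α / 2 - β / 2) := by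
    rw [← Real.cos_abs (m * α / 2 - β / 2)]
    apply Real.cos_le_cos_of_nonneg_of_le_pi (abs_nonneg _)
    · nlinarith [Real.pi_pos]
    · rw [abs_le]
      constructor <;> nlinarith
  have hL := Real.two_mul_cos_mul_cos (m * β / 2) (α / 2)
  have hR := Real.two_mul_cos_mul_cos (m * α / 2) (β / 2)
  have goal2 : Real.cos (m * β / 2) * Real.cos (α / 2)
      < Real.cos (m * α / 2) * Real.cos (β / 2) := by linarith
  calc Real.cos ((2 * s + 1) * β / 2) * Real.cos (α / 2)
      = Real.cos (m * β / 2) * Real.cos (α / 2) := by rw [hm]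
    _ < Real.cos (m * α / 2) * Real.cos (β / 2) := goal2
    _ = Real.cos ((2 * s + 1) * α / 2) * Real.cos (β / 2) := by rw [hm]

theorem stmt_5 (R : ℕ → Polynomial ℝ)
    (hR0 : R 0 = 1) (hR1 : R 1 = 1 - X)
    (hRrec : ∀ n, 2 ≤ n → R n = (2 - X) * R (n - 1) - R (n - 2))
    (s : ℕ) (hs : 1 ≤ s) :
    StrictAntiOn (fun x : ℝ => (R s).eval x)
      (Set.Ioo 0 (2 * (1 - Real.cos (Real.pi / (2 * s + 1))))) := by
  intro x hx y hy hxy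
  simp only [Set.mem_Ioo] at hx hy
  set t : ℝ := Real.pi / (2 * s + 1) with ht
  have hs1 : (1 : ℝ) ≤ s := by exact_mod_cast hs
  have hden : (0 : ℝ) < 2 * s + 1 := by linarith
  have htpos : 0 < t := div_pos Real.pi_pos hden
  have htle : t ≤ Real.pi := by
    rw [ht, div_le_iff₀ hden]
    nlinarith [Real.pi_pos]
  have hcost : -1 ≤ Real.cos t := Real.neg_one_le_cos t
  -- bounds giving arccos well-defined
  have key : ∀ z : ℝ, 0 < z → z < 2 * (1 - Real.cos t) →
      ∃ θ : ℝ, 0 < θ ∧ θ < t ∧ Real.cos θ = 1 - z / 2 := by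
    intro z hz0 hzr
    have h1 : 1 - z / 2 < 1 := by linarith
    have h2 : -1 ≤ 1 - z / 2 := by linarith
    refine ⟨Real.arccos (1 - z / 2), ?_, ?_, Real.cos_arccos h2 (by linarith)⟩
    · exact Real.arccos_pos.mpr h1
    · by_contra hcon
      push_neg at hcon
      have hle : Real.cos (Real.arccos (1 - z / 2)) ≤ Real.cos t :=
        Real.cos_le_cos_of_nonneg_of_le_pi htpos.le (Real.arccos_le_pi _) hcon
      rw [Real.cos_arccos h2 (by linarith)] at hle
      linarith
  obtain ⟨a, ha0, hat, hca⟩ := key x hx.1 hx.2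
  obtain ⟨b, hb0, hbt, hcb⟩ := key y hy.1 hy.2
  have hab : a < b := by
    by_contra hcon
    push_neg at hcon
    have hale : a ≤ Real.pi := le_trans hat.le htle
    have := Real.cos_le_cos_of_nonneg_of_le_pi hb0.le hale hcon
    rw [hca, hcb] at this
    linarith
  have hxa : x = 2 - 2 * Real.cos a := by rw [hca]; ring
  have hyb : y = 2 - 2 * Real.cos b := by rw [hcb]; ring
  have ida := (evalR_aux R hR0 hR1 hRrec a s).1
  have idb := (evalR_aux R hR0 hR1 hRrec b s).1
  rw [← hxa] at ida
  rw [← hyb] at idb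
  have hcahalf : 0 < Real.cos (a / 2) := by
    apply Real.cos_pos_of_mem_Ioo
    constructor <;> [nlinarith [Real.pi_pos]; nlinarith [lt_of_lt_of_le hat htle]]
  have hcbhalf : 0 < Real.cos (b / 2) := by
    apply Real.cos_pos_of_mem_Ioo
    constructor <;> [nlinarith [Real.pi_pos]; nlinarith [lt_of_lt_of_le hbt htle]]
  have hkey := cos_key s hs a b ha0 hab (by rw [← ht]; exact hbt)
  have hprod : 0 < Real.cos (a / 2) * Real.cos (b / 2) := mul_pos hcahalf hcbhalf
  have h1 : (R s).eval y * (Real.cos (a / 2) * Real.cos (b / 2))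
      < (R s).eval x * (Real.cos (a / 2) * Real.cos (b / 2)) := by
    calc (R s).eval y * (Real.cos (a / 2) * Real.cos (b / 2))
        = Real.cos ((2 * s + 1) * b / 2) * Real.cos (a / 2) := by
          linear_combination Real.cos (a / 2) * idb
      _ < Real.cos ((2 * s + 1) * a / 2) * Real.cos (b / 2) := hkey
      _ = (R s).eval x * (Real.cos (a / 2) * Real.cos (b / 2)) := by
          linear_combination -Real.cos (b / 2) * ida
  exact lt_of_mul_lt_mul_right h1 hprod.le
end

section
/- Let R_n be defined by R_0=1, R_1(X)=1-X, R_n(X)=(2-X)R_{n-1}(X)-R_{n-2}(X), let r(s)=2(1-cos(π/(2s+1))), and define h_s(X)=2R_{s-1}(X)+(X-3)R_s(X). Then h_s is strictly increasing on [0, r(s)] and has a unique root in the open interval (0, r(s)). -/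
/-!
Substituting `x = 4 sin² φ` turns the recurrence into the Chebyshev-type identity
`R_n(4 sin² φ) cos φ = cos ((2n+1) φ)`, and then, with `m = 2s+1`,
`h_s(4 sin² φ) = 4 sin (m φ) sin φ - cos (m φ) / cos φ`.
As `φ` runs over `[0, π/(2m)]`, `4 sin² φ` runs monotonically over `[0, r(s)]`; there the first
term is strictly increasing and the second is decreasing. At the endpoints `h_s` takes the values
`-1` and `4 sin (π/(2m)) > 0`, so the intermediate value theorem gives the root.
-/

open Polynomial Real Set

theorem StrictMonoOn.of_comp_of_surjOn {α β γ : Type*}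
    [LinearOrder α] [Preorder β] [Preorder γ] {f : β → γ} {g : α → β} {s : Set α} {t : Set β}
    (hfg : StrictMonoOn (f ∘ g) s) (hg : MonotoneOn g s) (hgst : SurjOn g s t) : StrictMonoOn f t := by
  intro x hx y hy hxy
  obtain ⟨a, ha, rfl⟩ := hgst hx
  obtain ⟨b, hb, rfl⟩ := hgst hy
  have hab : a < b := lt_of_not_ge fun hba => (hxy.trans_le (hg hb ha hba)).false
  exact hfg ha hb hab

theorem StrictMonoOn.existsUnique_mem_Ioo_eq {f : ℝ → ℝ} {a b c : ℝ}
    (hf : StrictMonoOn f (Icc a b)) (hab : a ≤ b) (hcont : ContinuousOn f (Icc a b))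
    (ha : f a < c) (hb : c < f b) : ∃! x, x ∈ Ioo a b ∧ f x = c := by
  obtain ⟨x, hx, hfx⟩ := intermediate_value_Ioo hab hcont ⟨ha, hb⟩
  refine ⟨x, ⟨hx, hfx⟩, fun y ⟨hy, hfy⟩ => ?_⟩
  exact hf.injOn (Ioo_subset_Icc_self hy) (Ioo_subset_Icc_self hx) (hfy.trans hfx.symm)

theorem Real.cos_add_two_mul_add_cos_sub_two_mul (a b : ℝ) :
    cos (a + 2 * b) + cos (a - 2 * b) = (2 - 4 * sin b ^ 2) * cos a := by
  rw [cos_add, cos_sub, cos_two_mul, cos_sq']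
  ring

theorem Real.two_mul_one_sub_cos (x : ℝ) : 2 * (1 - cos x) = 4 * sin (x / 2) ^ 2 := by
  rw [sin_sq_eq_half_sub, mul_div_cancel₀ x two_ne_zero]
  ring

theorem Real.monotoneOn_four_mul_sin_sq {L : ℝ} (hL : L ≤ π / 2) :
    MonotoneOn (fun φ => 4 * sin φ ^ 2) (Icc 0 L) := fun φ hφ ψ hψ hφψ => by
  have := sin_le_sin_of_le_of_le_pi_div_two (by linarith [hφ.1, pi_pos]) (by linarith [hψ.2])
    hφψ
  have := sin_nonneg_of_nonneg_of_le_pi hφ.1 (by linarith [hφ.2, pi_pos])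
  simp only
  gcongr

theorem Real.surjOn_four_mul_sin_sq {L : ℝ} (hL : 0 ≤ L) :
    SurjOn (fun φ => 4 * sin φ ^ 2) (Icc 0 L) (Icc 0 (4 * sin L ^ 2)) := fun y hy =>
  intermediate_value_Icc hL (by fun_prop : Continuous fun φ => 4 * sin φ ^ 2).continuousOn
    (by simpa using hy)

theorem eval_four_mul_sin_sq_mul_cos (R : ℕ → ℝ[X]) (hR0 : R 0 = 1) (hR1 : R 1 = 1 - X)
    (hRrec : ∀ n, 2 ≤ n → R n = (2 - X) * R (n - 1) - R (n - 2)) (n : ℕ) (φ : ℝ) :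
    (R n).eval (4 * sin φ ^ 2) * cos φ = cos ((2 * n + 1) * φ) := by
  induction n using Nat.twoStepInduction with
  | zero => simp [hR0]
  | one =>
    rw [hR1, show (2 * ((1 : ℕ) : ℝ) + 1) * φ = 3 * φ by norm_num, cos_three_mul]
    simp only [eval_sub, eval_one, eval_X]
    linear_combination (-4 * cos φ) * sin_sq_add_cos_sq φ
  | more n ih ih' =>
    rw [hRrec (n + 2) le_add_self, show n + 2 - 1 = n + 1 from rfl, show n + 2 - 2 = n from rfl]
    have hcos := cos_add_two_mul_add_cos_sub_two_mul ((2 * ((n + 1 : ℕ) : ℝ) + 1) * φ) φ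
    rw [show (2 * ((n + 1 : ℕ) : ℝ) + 1) * φ + 2 * φ = (2 * ((n + 2 : ℕ) : ℝ) + 1) * φ by
        push_cast; ring,
      show (2 * ((n + 1 : ℕ) : ℝ) + 1) * φ - 2 * φ = (2 * (n : ℝ) + 1) * φ by
        push_cast; ring] at hcos
    simp only [eval_sub, eval_mul, eval_X, eval_ofNat]
    linear_combination (2 - 4 * sin φ ^ 2) * ih' - ih - hcos

theorem eval_two_mul_add_X_sub_three_mul_four_mul_sin_sq (R : ℕ → ℝ[X]) (hR0 : R 0 = 1)
    (hR1 : R 1 = 1 - X) (hRrec : ∀ n, 2 ≤ n → R n = (2 - X) * R (n - 1) - R (n - 2))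
    {s : ℕ} (hs : 1 ≤ s) {φ : ℝ} (hφ : cos φ ≠ 0) :
    (2 * R (s - 1) + (X - 3) * R s).eval (4 * sin φ ^ 2)
      = 4 * sin ((2 * s + 1) * φ) * sin φ - cos ((2 * s + 1) * φ) / cos φ := by
  obtain ⟨n, rfl⟩ := Nat.exists_eq_add_of_le' hs
  have hprev := eval_four_mul_sin_sq_mul_cos R hR0 hR1 hRrec n φ
  have hcur := eval_four_mul_sin_sq_mul_cos R hR0 hR1 hRrec (n + 1) φ
  set a := (2 * ((n + 1 : ℕ) : ℝ) + 1) * φ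
  rw [show (2 * (n : ℝ) + 1) * φ = a - 2 * φ by simp only [a]; push_cast; ring,
    cos_sub, cos_two_mul, sin_two_mul] at hprev
  rw [Nat.add_sub_cancel, eq_sub_iff_add_eq, ← mul_left_inj' hφ, add_mul,
    div_mul_cancel₀ _ hφ]
  simp only [eval_add, eval_mul, eval_sub, eval_X, eval_ofNat]
  linear_combination 2 * hprev + (4 * sin φ ^ 2 - 3) * hcur + 4 * cos a * sin_sq_add_cos_sq φ

section Trigonometric

variable {m : ℝ}

theorem strictMonoOn_sin_mul_mul_sin (hm : 1 ≤ m) :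
    StrictMonoOn (fun φ => sin (m * φ) * sin φ) (Icc 0 (π / (2 * m))) := by
  have hm0 : 0 < m := by linarith
  have hmL : m * (π / (2 * m)) = π / 2 := by field_simp
  have hL : π / (2 * m) ≤ π / 2 := by gcongr; linarith
  intro φ ⟨hφ0, hφL⟩ ψ ⟨hψ0, hψL⟩ hφψ
  have hmφ : m * φ ≤ m * (π / (2 * m)) := by gcongr
  have hmψ : m * ψ ≤ m * (π / (2 * m)) := by gcongr
  refine mul_lt_mul'' ?_ ?_ ?_ ?_
  · exact strictMonoOn_sin ⟨by nlinarith [pi_pos], by linarith⟩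
      ⟨by nlinarith [pi_pos], by linarith⟩ (by gcongr)
  · exact strictMonoOn_sin ⟨by linarith [pi_pos], by linarith⟩
      ⟨by linarith [pi_pos], by linarith⟩ hφψ
  · exact sin_nonneg_of_nonneg_of_le_pi (by positivity) (by linarith [pi_pos])
  · exact sin_nonneg_of_nonneg_of_le_pi hφ0 (by linarith [pi_pos])

theorem antitoneOn_cos_mul_div_cos (hm : 1 < m) :
    AntitoneOn (fun φ => cos (m * φ) / cos φ) (Icc 0 (π / (2 * m))) := by
  have hm0 : 0 < m := by linarith
  have hmL : m * (π / (2 * m)) = π / 2 := by field_simp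
  have hL : π / (2 * m) < π / 2 := by gcongr; linarith
  have hcos : ∀ φ ∈ Icc 0 (π / (2 * m)), cos φ ≠ 0 := fun φ hφ =>
    (cos_pos_of_mem_Ioo ⟨by linarith [pi_pos, hφ.1], by linarith [pi_pos, hφ.2]⟩).ne'
  have hderiv : ∀ φ, cos φ ≠ 0 → HasDerivAt (fun φ => cos (m * φ) / cos φ)
      ((-sin (m * φ) * (m * 1) * cos φ - cos (m * φ) * -sin φ) / cos φ ^ 2) φ := fun φ hφ =>
    ((hasDerivAt_id φ).const_mul m).cos.div (hasDerivAt_cos φ) hφ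
  apply antitoneOn_of_deriv_nonpos (convex_Icc _ _)
  · exact (by fun_prop : Continuous fun φ => cos (m * φ)).continuousOn.div
      continuous_cos.continuousOn hcos
  · exact fun φ hφ =>
      (hderiv φ (hcos φ (interior_subset hφ))).differentiableAt.differentiableWithinAt
  · intro φ hφ
    rw [interior_Icc] at hφ
    rw [(hderiv φ (hcos φ (Ioo_subset_Icc_self hφ))).deriv]
    have hmφ : m * φ ≤ π / 2 := by rw [← hmL]; gcongr; exact hφ.2.le
    have hsin_mφ : 0 ≤ sin (m * φ) :=
      sin_nonneg_of_nonneg_of_le_pi (by nlinarith [hφ.1]) (by linarith [pi_pos])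
    have hsin_sub : 0 ≤ sin ((m - 1) * φ) :=
      sin_nonneg_of_nonneg_of_le_pi (by nlinarith [hφ.1]) (by nlinarith [hφ.1, pi_pos])
    have hcosφ : 0 ≤ cos φ :=
      cos_nonneg_of_mem_Icc ⟨by linarith [pi_pos, hφ.1], by linarith [hφ.2]⟩
    -- the numerator is `-((m - 1) sin (mφ) cos φ + sin ((m - 1) φ))`
    rw [sub_one_mul, sin_sub] at hsin_sub
    apply div_nonpos_of_nonpos_of_nonneg _ (sq_nonneg _)
    nlinarith [mul_nonneg (mul_nonneg (sub_nonneg.mpr hm.le) hsin_mφ) hcosφ]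

theorem strictMonoOn_four_mul_sin_mul_sin_sub_cos_div_cos (hm : 1 < m) :
    StrictMonoOn (fun φ => 4 * sin (m * φ) * sin φ - cos (m * φ) / cos φ)
      (Icc 0 (π / (2 * m))) := by
  intro φ hφ ψ hψ hφψ
  have hprod := strictMonoOn_sin_mul_mul_sin hm.le hφ hψ hφψ
  have hquot := antitoneOn_cos_mul_div_cos hm hφ hψ hφψ.le
  simp only at hprod hquot ⊢
  linarith

end Trigonometric

theorem stmt_9 (R : ℕ → Polynomial ℝ)
    (hR0 : R 0 = 1) (hR1 : R 1 = 1 - X)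
    (hRrec : ∀ n, 2 ≤ n → R n = (2 - X) * R (n - 1) - R (n - 2))
    (s : ℕ) (hs : 1 ≤ s) :
    StrictMonoOn (fun x : ℝ => (2 * R (s - 1) + (X - 3) * R s).eval x)
        (Set.Icc 0 (2 * (1 - Real.cos (Real.pi / (2 * s + 1))))) ∧
      ∃! x : ℝ, x ∈ Set.Ioo 0 (2 * (1 - Real.cos (Real.pi / (2 * s + 1)))) ∧
        (2 * R (s - 1) + (X - 3) * R s).eval x = 0 := by
  set m : ℝ := 2 * s + 1
  have hm : 1 < m := by simp only [m]; norm_cast; omega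
  set L := π / (2 * m)
  have hL0 : 0 < L := by positivity
  have hmL : m * L = π / 2 := by simp only [L]; field_simp
  have hLπ : L < π / 2 := by rw [← hmL]; nlinarith
  rw [two_mul_one_sub_cos, div_div, mul_comm m]
  set h := 2 * R (s - 1) + (X - 3) * R s
  have hsubst : EqOn (fun φ => 4 * sin (m * φ) * sin φ - cos (m * φ) / cos φ)
      ((fun x => h.eval x) ∘ fun φ => 4 * sin φ ^ 2) (Icc 0 L) := fun φ hφ =>
    (eval_two_mul_add_X_sub_three_mul_four_mul_sin_sq R hR0 hR1 hRrec hs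
      (cos_pos_of_mem_Ioo ⟨by linarith [hφ.1, pi_pos], by linarith [hφ.2]⟩).ne').symm
  have hmono : StrictMonoOn (fun x => h.eval x) (Icc 0 (4 * sin L ^ 2)) :=
    ((strictMonoOn_four_mul_sin_mul_sin_sub_cos_div_cos hm).congr hsubst).of_comp_of_surjOn
      (monotoneOn_four_mul_sin_sq hLπ.le) (surjOn_four_mul_sin_sq hL0.le)
  have h_left : h.eval 0 = -1 := by simpa using (hsubst ⟨le_rfl, hL0.le⟩).symm
  have h_right : h.eval (4 * sin L ^ 2) = 4 * sin L := by
    simpa [hmL] using (hsubst ⟨hL0.le, le_rfl⟩).symm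
  refine ⟨hmono, hmono.existsUnique_mem_Ioo_eq (by positivity) h.continuous.continuousOn ?_ ?_⟩
  · simp only [h_left]
    norm_num
  · simp only [h_right]
    exact mul_pos four_pos (sin_pos_of_pos_of_lt_pi hL0 (by linarith))
end

section
/- For a tree T on n ≥ 2 vertices, any eigenvector Φ of the graph Laplacian L(T) corresponding to the second smallest eigenvalue (the algebraic connectivity) attains both its maximum and its minimum value at leaves (pendant vertices) of T. -/
/-
Since `μ > 0`, the eigenvector `Φ` sums to zero, so it attains a positive maximum `M` at some
vertex `v`. Suppose `v` has two neighbours, and let `S`, `T` be the two branches of the tree at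
`v` containing them. The nonnegative vectors `ξ_S = (M - Φ) · 1_S` and `ξ_T` satisfy
`⟪ξ, L ξ⟫ = μ ‖ξ‖² - μ M ∑ ξ` (the only vertex outside a branch adjacent to it is `v`, where
`M - Φ` vanishes), and `L` does not couple them. Hence the zero-sum vector
`(∑ ξ_T) ξ_S - (∑ ξ_S) ξ_T` has Rayleigh quotient strictly below `μ`. This contradicts the
minimality of `μ`, which, expanding in an orthonormal eigenbasis of `L`, gives
`μ ‖x‖² ≤ ⟪x, L x⟫` for every zero-sum `x`. So `v` is a leaf; the minimum is the maximum of `-Φ`.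
-/

open Matrix

theorem Matrix.IsHermitian.mul_dotProduct_self_le {n : Type*} [Fintype n] [DecidableEq n]
    {A : Matrix n n ℝ} (hA : A.IsHermitian) {μ : ℝ} {x : n → ℝ}
    (hx : ∀ i, hA.eigenvalues i < μ → ⇑(hA.eigenvectorBasis i) ⬝ᵥ x = 0) :
    μ * (x ⬝ᵥ x) ≤ x ⬝ᵥ A *ᵥ x := by
  set b := hA.eigenvectorBasis
  have parseval (y z : n → ℝ) : y ⬝ᵥ z = ∑ i, (⇑(b i) ⬝ᵥ y) * (⇑(b i) ⬝ᵥ z) := by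
    have := b.sum_inner_mul_inner (WithLp.toLp 2 y) (WithLp.toLp 2 z)
    simp only [EuclideanSpace.inner_eq_star_dotProduct, star_trivial] at this
    rw [dotProduct_comm y z, ← this]
    exact Finset.sum_congr rfl fun i _ => by rw [dotProduct_comm z]
  have hAb (i : n) : ⇑(b i) ⬝ᵥ A *ᵥ x = hA.eigenvalues i * (⇑(b i) ⬝ᵥ x) := by
    rw [dotProduct_mulVec, ← mulVec_transpose, ← conjTranspose_eq_transpose_of_trivial, hA.eq,
      hA.mulVec_eigenvectorBasis, smul_dotProduct, smul_eq_mul]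
  rw [parseval x x, parseval x (A *ᵥ x), Finset.mul_sum]
  refine Finset.sum_le_sum fun i _ => ?_
  rw [hAb]
  rcases lt_or_ge (hA.eigenvalues i) μ with hlt | hge
  · simp [hx i hlt]
  · nlinarith [mul_le_mul_of_nonneg_right hge (mul_self_nonneg (⇑(b i) ⬝ᵥ x))]

namespace SimpleGraph

variable {V : Type*}

section deleteIncidenceSet

variable {G : SimpleGraph V}

theorem eq_of_reachable_deleteIncidenceSet {v w : V}
    (h : (G.deleteIncidenceSet v).Reachable v w) : v = w := by
  obtain ⟨p⟩ := h
  cases p with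
  | nil => rfl
  | cons h _ => exact absurd rfl (deleteIncidenceSet_adj.mp h).2.1

theorem reachable_deleteIncidenceSet_or_eq {v w y z : V} (hwv : w ≠ v)
    (hy : (G.deleteIncidenceSet v).Reachable w y) (hyz : G.Adj y z) :
    (G.deleteIncidenceSet v).Reachable w z ∨ z = v := by
  refine or_iff_not_imp_right.mpr fun hzv => hy.trans (Adj.reachable ?_)
  refine deleteIncidenceSet_adj.mpr ⟨hyz, ?_, hzv⟩
  rintro rfl
  exact hwv (eq_of_reachable_deleteIncidenceSet hy.symm).symm

theorem IsAcyclic.disjoint_reachable_deleteIncidenceSet (hG : G.IsAcyclic) {v w₁ w₂ : V}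
    (h₁ : G.Adj v w₁) (h₂ : G.Adj v w₂) (hne : w₁ ≠ w₂) :
    Disjoint {y | (G.deleteIncidenceSet v).Reachable w₁ y}
      {y | (G.deleteIncidenceSet v).Reachable w₂ y} := by
  refine Set.disjoint_left.mpr fun y hy₁ hy₂ => isBridge_iff.mp
    (isAcyclic_iff_forall_adj_isBridge.mp hG h₁) ?_
  have hle : G.deleteIncidenceSet v ≤ G.deleteEdges {s(v, w₁)} :=
    deleteEdges_anti (Set.singleton_subset_iff.mpr ⟨h₁, Sym2.mem_mk_left v w₁⟩)
  have hadj : (G.deleteEdges {s(v, w₁)}).Adj v w₂ :=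
    deleteEdges_adj.mpr ⟨h₂, fun h => hne (Sym2.congr_right.mp h).symm⟩
  exact hadj.reachable.trans ((hy₂.trans hy₁.symm).mono hle)

end deleteIncidenceSet

noncomputable def deficitOn (Φ : V → ℝ) (v : V) (S : Set V) : V → ℝ :=
  S.indicator fun y => Φ v - Φ y

theorem deficitOn_nonneg {Φ : V → ℝ} {v : V} {S : Set V} (hmax : ∀ w, Φ w ≤ Φ v) (y : V) : 0 ≤ deficitOn Φ v S y :=
  Set.indicator_nonneg (fun w _ => sub_nonneg.mpr (hmax w)) y

variable [Fintype V] [DecidableEq V]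

-- The least eigenvalue of `L` with an eigenvector orthogonal to the constants, i.e. `λ₂` for a
-- connected graph.
def IsAlgebraicConnectivity (G : SimpleGraph V) [DecidableRel G.Adj] (μ : ℝ) : Prop :=
  IsLeast {μ' : ℝ | ∃ ψ : V → ℝ, ψ ≠ 0 ∧ (∑ v, ψ v) = 0 ∧
    G.lapMatrix ℝ *ᵥ ψ = μ' • ψ} μ

variable {G : SimpleGraph V} [DecidableRel G.Adj]

theorem sum_lapMatrix_mulVec (x : V → ℝ) : ∑ i, (G.lapMatrix ℝ *ᵥ x) i = 0 := by
  rw [← one_dotProduct, dotProduct_mulVec, ← mulVec_transpose, (G.isSymm_lapMatrix (R := ℝ)).eq]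
  exact (congrArg (· ⬝ᵥ x) G.lapMatrix_mulVec_const_eq_zero).trans (zero_dotProduct x)

theorem sum_eq_zero_of_lapMatrix_mulVec_eq_smul {c : ℝ} {x : V → ℝ} (hc : c ≠ 0)
    (hx : G.lapMatrix ℝ *ᵥ x = c • x) : ∑ i, x i = 0 := by
  have := sum_lapMatrix_mulVec (G := G) x
  simp only [hx, Pi.smul_apply, smul_eq_mul, ← Finset.mul_sum] at this
  exact (mul_eq_zero.mp this).resolve_left hc

theorem dotProduct_eq_zero_of_lapMatrix_mulVec_eq_zero (hG : G.Connected) {u x : V → ℝ}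
    (hu : G.lapMatrix ℝ *ᵥ u = 0) (hx : ∑ i, x i = 0) : u ⬝ᵥ x = 0 := by
  obtain ⟨i₀⟩ := hG.nonempty
  have hconst := (lapMatrix_mulVec_eq_zero_iff_forall_reachable G).mp hu
  calc u ⬝ᵥ x = ∑ i, u i₀ * x i :=
        Finset.sum_congr rfl fun i _ => by rw [hconst i i₀ (hG.preconnected i i₀)]
    _ = 0 := by rw [← Finset.mul_sum, hx, mul_zero]

theorem lapMatrix_mulVec_indicator_of_mem {S : Set V} {f : V → ℝ} {y : V}
    (hS : ∀ a ∈ S, ∀ b, G.Adj a b → b ∈ S ∨ f b = 0) (hy : y ∈ S) :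
    (G.lapMatrix ℝ *ᵥ S.indicator f) y = (G.lapMatrix ℝ *ᵥ f) y := by
  rw [lapMatrix_mulVec_apply, lapMatrix_mulVec_apply, Set.indicator_of_mem hy]
  congr 1
  refine Finset.sum_congr rfl fun z hz => ?_
  rcases hS y hy z ((mem_neighborFinset G y z).mp hz) with hzS | hfz
  · exact Set.indicator_of_mem hzS f
  · rw [hfz, Set.indicator_apply_eq_zero]
    exact fun _ => hfz

theorem indicator_dotProduct_lapMatrix_mulVec_indicator {S T : Set V} (hST : Disjoint S T)
    (hadj : ∀ a ∈ S, ∀ b ∈ T, ¬G.Adj a b) (f g : V → ℝ) :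
    S.indicator f ⬝ᵥ G.lapMatrix ℝ *ᵥ T.indicator g = 0 := by
  refine Finset.sum_eq_zero fun y _ => ?_
  by_cases hy : y ∈ S
  · rw [lapMatrix_mulVec_apply, Set.indicator_of_notMem (hST.notMem_of_mem_left hy),
      Finset.sum_eq_zero fun z hz => Set.indicator_of_notMem
        (fun hzT => hadj y hy z hzT ((mem_neighborFinset G y z).mp hz)) g]
    ring
  · rw [Set.indicator_of_notMem hy, zero_mul]

section deficitOn

variable {Φ : V → ℝ} {μ : ℝ} {v : V} {S : Set V}

theorem lapMatrix_mulVec_deficitOn_of_mem (heig : G.lapMatrix ℝ *ᵥ Φ = μ • Φ)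
    (hS : ∀ a ∈ S, ∀ b, G.Adj a b → b ∈ S ∨ b = v) {y : V} (hy : y ∈ S) :
    (G.lapMatrix ℝ *ᵥ deficitOn Φ v S) y = μ * deficitOn Φ v S y - μ * Φ v := by
  have hgap : (fun w => Φ v - Φ w) = Φ v • (fun _ => (1 : ℝ)) - Φ := by
    ext w; simp
  rw [deficitOn, lapMatrix_mulVec_indicator_of_mem (fun a ha b hab => ?_) hy,
    Set.indicator_of_mem hy, hgap, mulVec_sub, mulVec_smul, lapMatrix_mulVec_const_eq_zero, heig]
  · simp only [smul_zero, zero_sub, Pi.neg_apply, Pi.smul_apply, smul_eq_mul]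
    ring
  · exact (hS a ha b hab).imp_right fun hb => by rw [hb, sub_self]

theorem deficitOn_dotProduct_lapMatrix_mulVec_self (heig : G.lapMatrix ℝ *ᵥ Φ = μ • Φ)
    (hS : ∀ a ∈ S, ∀ b, G.Adj a b → b ∈ S ∨ b = v) :
    deficitOn Φ v S ⬝ᵥ G.lapMatrix ℝ *ᵥ deficitOn Φ v S =
      μ * (deficitOn Φ v S ⬝ᵥ deficitOn Φ v S) - μ * Φ v * ∑ y, deficitOn Φ v S y := by
  simp only [dotProduct, Finset.mul_sum, ← Finset.sum_sub_distrib]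
  refine Finset.sum_congr rfl fun y _ => ?_
  by_cases hy : y ∈ S
  · rw [lapMatrix_mulVec_deficitOn_of_mem heig hS hy]
    ring
  · simp [deficitOn, Set.indicator_of_notMem hy]

theorem sum_deficitOn_pos (heig : G.lapMatrix ℝ *ᵥ Φ = μ • Φ) (hμ : 0 < μ)
    (hmax : ∀ w, Φ w ≤ Φ v) (hpos : 0 < Φ v)
    (hS : ∀ a ∈ S, ∀ b, G.Adj a b → b ∈ S ∨ b = v) (hne : S.Nonempty) :
    0 < ∑ y, deficitOn Φ v S y := by
  obtain ⟨y, hy⟩ := hne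
  refine (Finset.sum_nonneg fun w _ => deficitOn_nonneg hmax w).lt_of_ne fun hsum => ?_
  have hzero : deficitOn Φ v S = 0 := funext fun w =>
    (Finset.sum_eq_zero_iff_of_nonneg fun w _ => deficitOn_nonneg hmax w).mp hsum.symm w
      (Finset.mem_univ w)
  have := lapMatrix_mulVec_deficitOn_of_mem heig hS hy
  simp only [hzero, mulVec_zero, Pi.zero_apply, mul_zero, zero_sub] at this
  linarith [mul_pos hμ hpos]

end deficitOn

namespace IsAlgebraicConnectivity

variable {μ : ℝ} (hμ : G.IsAlgebraicConnectivity μ) {Φ : V → ℝ} {v : V}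
include hμ

theorem pos (hG : G.Connected) : 0 < μ := by
  obtain ⟨ψ, hψ, hsum, heig⟩ := hμ.1
  have hquad : ψ ⬝ᵥ G.lapMatrix ℝ *ᵥ ψ = μ * (ψ ⬝ᵥ ψ) := by
    rw [heig, dotProduct_smul, smul_eq_mul]
  have hnonneg : 0 ≤ μ * (ψ ⬝ᵥ ψ) :=
    hquad ▸ (G.posSemidef_lapMatrix ℝ).dotProduct_mulVec_nonneg ψ
  refine lt_of_le_of_ne (nonneg_of_mul_nonneg_left hnonneg ?_) fun h0 => hψ ?_
  · exact dotProduct_self_star_pos_iff.mpr hψ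
  · have hker : G.lapMatrix ℝ *ᵥ ψ = 0 := by rw [heig, ← h0, zero_smul]
    exact dotProduct_self_eq_zero.mp (dotProduct_eq_zero_of_lapMatrix_mulVec_eq_zero hG hker hsum)

theorem mul_dotProduct_self_le (hG : G.Connected) {x : V → ℝ} (hx : ∑ i, x i = 0) :
    μ * (x ⬝ᵥ x) ≤ x ⬝ᵥ G.lapMatrix ℝ *ᵥ x := by
  have hL := G.isHermitian_lapMatrix (R := ℝ)
  refine hL.mul_dotProduct_self_le fun i hi => ?_
  have hu := hL.mulVec_eigenvectorBasis i
  by_cases hsum : ∑ j, hL.eigenvectorBasis i j = 0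
  · have hne : ⇑(hL.eigenvectorBasis i) ≠ 0 := fun h0 =>
      (hL.eigenvectorBasis.orthonormal.ne_zero i) (by ext j; simp [h0])
    exact absurd (hμ.2 ⟨_, hne, hsum, hu⟩) (not_le.mpr hi)
  · have hzero : hL.eigenvalues i = 0 := by
      by_contra h
      exact hsum (sum_eq_zero_of_lapMatrix_mulVec_eq_smul h hu)
    rw [hzero, zero_smul] at hu
    exact dotProduct_eq_zero_of_lapMatrix_mulVec_eq_zero hG hu hx

theorem false_of_two_branches_at_max (hG : G.Connected) (heig : G.lapMatrix ℝ *ᵥ Φ = μ • Φ)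
    (hmax : ∀ w, Φ w ≤ Φ v) (hpos : 0 < Φ v) {S T : Set V} (hST : Disjoint S T)
    (hvS : v ∉ S) (hvT : v ∉ T) (hS : ∀ a ∈ S, ∀ b, G.Adj a b → b ∈ S ∨ b = v)
    (hT : ∀ a ∈ T, ∀ b, G.Adj a b → b ∈ T ∨ b = v) (hSne : S.Nonempty) (hTne : T.Nonempty) :
    False := by
  have hμpos := hμ.pos hG
  set ξ₁ := deficitOn Φ v S
  set ξ₂ := deficitOn Φ v T
  set s₁ := ∑ y, ξ₁ y
  set s₂ := ∑ y, ξ₂ y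
  have hs₁ : 0 < s₁ := sum_deficitOn_pos heig hμpos hmax hpos hS hSne
  have hs₂ : 0 < s₂ := sum_deficitOn_pos heig hμpos hmax hpos hT hTne
  have h12 : ξ₁ ⬝ᵥ G.lapMatrix ℝ *ᵥ ξ₂ = 0 :=
    indicator_dotProduct_lapMatrix_mulVec_indicator hST (fun a ha b hb hab =>
      (hS a ha b hab).elim (hST.notMem_of_mem_left · hb) fun h => hvT (h ▸ hb)) _ _
  have h21 : ξ₂ ⬝ᵥ G.lapMatrix ℝ *ᵥ ξ₁ = 0 :=
    indicator_dotProduct_lapMatrix_mulVec_indicator hST.symm (fun a ha b hb hab =>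
      (hT a ha b hab).elim (hST.notMem_of_mem_right · hb) fun h => hvS (h ▸ hb)) _ _
  have horth : ξ₁ ⬝ᵥ ξ₂ = 0 := by
    refine Finset.sum_eq_zero fun y _ => ?_
    by_cases hy : y ∈ S
    · simp [ξ₂, deficitOn, Set.indicator_of_notMem (hST.notMem_of_mem_left hy)]
    · simp [ξ₁, deficitOn, Set.indicator_of_notMem hy]
  have hray := hμ.mul_dotProduct_self_le hG (x := s₂ • ξ₁ - s₁ • ξ₂) (by
    simp only [Pi.sub_apply, Pi.smul_apply, smul_eq_mul, Finset.sum_sub_distrib, ← Finset.mul_sum]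
    ring)
  have h11 : ξ₁ ⬝ᵥ G.lapMatrix ℝ *ᵥ ξ₁ = μ * (ξ₁ ⬝ᵥ ξ₁) - μ * Φ v * s₁ :=
    deficitOn_dotProduct_lapMatrix_mulVec_self heig hS
  have h22 : ξ₂ ⬝ᵥ G.lapMatrix ℝ *ᵥ ξ₂ = μ * (ξ₂ ⬝ᵥ ξ₂) - μ * Φ v * s₂ :=
    deficitOn_dotProduct_lapMatrix_mulVec_self heig hT
  simp only [mulVec_sub, mulVec_smul, dotProduct_sub, sub_dotProduct, dotProduct_smul,
    smul_dotProduct, smul_eq_mul, h11, h12, h21, h22, horth, dotProduct_comm ξ₂ ξ₁] at hray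
  nlinarith [mul_pos (mul_pos hμpos hpos) (mul_pos (mul_pos hs₁ hs₂) (add_pos hs₁ hs₂))]

theorem degree_eq_one_of_forall_le (hT : G.IsTree) (heig : G.lapMatrix ℝ *ᵥ Φ = μ • Φ)
    (hmax : ∀ w, Φ w ≤ Φ v) (hpos : 0 < Φ v) : G.degree v = 1 := by
  have hdeg : G.degree v ≠ 0 := by
    intro h0
    have hv := congrFun heig v
    simp only [lapMatrix_mulVec_apply, h0, Finset.card_eq_zero.mp h0, Nat.cast_zero, zero_mul,
      Finset.sum_empty, sub_zero, Pi.smul_apply, smul_eq_mul] at hv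
    linarith [mul_pos (hμ.pos hT.connected) hpos]
  by_contra h1
  obtain ⟨w₁, hw₁, w₂, hw₂, hne⟩ := Finset.one_lt_card.mp
    (show 1 < (G.neighborFinset v).card by rw [card_neighborFinset_eq_degree]; omega)
  rw [mem_neighborFinset] at hw₁ hw₂
  exact hμ.false_of_two_branches_at_max hT.connected heig hmax hpos
    (hT.isAcyclic.disjoint_reachable_deleteIncidenceSet hw₁ hw₂ hne)
    (fun h => hw₁.ne (eq_of_reachable_deleteIncidenceSet h.symm))
    (fun h => hw₂.ne (eq_of_reachable_deleteIncidenceSet h.symm))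
    (fun _ ha _ hab => reachable_deleteIncidenceSet_or_eq hw₁.ne' ha hab)
    (fun _ ha _ hab => reachable_deleteIncidenceSet_or_eq hw₂.ne' ha hab)
    ⟨w₁, .refl w₁⟩ ⟨w₂, .refl w₂⟩

end IsAlgebraicConnectivity

end SimpleGraph

open SimpleGraph in
theorem stmt_12_general {V : Type*} [Fintype V] [DecidableEq V]
    (G : SimpleGraph V) [DecidableRel G.Adj] (hT : G.IsTree)
    (μ : ℝ)
    (hμ : IsLeast {μ' : ℝ | ∃ ψ : V → ℝ, ψ ≠ 0 ∧ (∑ v, ψ v) = 0 ∧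
        Matrix.mulVec (G.lapMatrix ℝ) ψ = μ' • ψ} μ)
    (Φ : V → ℝ) (hΦ : Φ ≠ 0) (heig : Matrix.mulVec (G.lapMatrix ℝ) Φ = μ • Φ) :
    (∃ u : V, G.degree u = 1 ∧ ∀ w : V, Φ w ≤ Φ u) ∧
      (∃ u : V, G.degree u = 1 ∧ ∀ w : V, Φ u ≤ Φ w) := by
  have hμ' : G.IsAlgebraicConnectivity μ := hμ
  have : Nonempty V := hT.connected.nonempty
  have hmax_leaf (Ψ : V → ℝ) (hΨ : Ψ ≠ 0) (heigΨ : G.lapMatrix ℝ *ᵥ Ψ = μ • Ψ) :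
      ∃ u, G.degree u = 1 ∧ ∀ w, Ψ w ≤ Ψ u := by
    have hsum := sum_eq_zero_of_lapMatrix_mulVec_eq_smul (hμ'.pos hT.connected).ne' heigΨ
    obtain ⟨u, hu⟩ := Finite.exists_max Ψ
    obtain ⟨w, -, hw⟩ := Finset.exists_pos_of_sum_zero_of_exists_nonzero Ψ hsum
      (by simpa using Function.ne_iff.mp hΨ)
    exact ⟨u, hμ'.degree_eq_one_of_forall_le hT heigΨ hu (hw.trans_le (hu w)), hu⟩
  obtain ⟨u, hu, hmin⟩ := hmax_leaf (-Φ) (neg_ne_zero.mpr hΦ) (by rw [mulVec_neg, heig, smul_neg])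
  exact ⟨hmax_leaf Φ hΦ heig, u, hu, fun w => neg_le_neg_iff.mp (hmin w)⟩

theorem stmt_12 {V : Type*} [Fintype V] [DecidableEq V]
    (G : SimpleGraph V) [DecidableRel G.Adj] (hT : G.IsTree)
    (hcard : 2 ≤ Fintype.card V)
    (μ : ℝ)
    (hμ : IsLeast {μ' : ℝ | ∃ ψ : V → ℝ, ψ ≠ 0 ∧ (∑ v, ψ v) = 0 ∧
        Matrix.mulVec (G.lapMatrix ℝ) ψ = μ' • ψ} μ)
    (Φ : V → ℝ) (hΦ : Φ ≠ 0) (heig : Matrix.mulVec (G.lapMatrix ℝ) Φ = μ • Φ) :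
    (∃ u : V, G.degree u = 1 ∧ ∀ w : V, Φ w ≤ Φ u) ∧
      (∃ u : V, G.degree u = 1 ∧ ∀ w : V, Φ u ≤ Φ w) :=
  stmt_12_general G hT μ hμ Φ hΦ heig
end
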